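/- Let ω > 0, c_ω > 0, R > 0, and let γ, η : ℝ² → ℝ be integrable with support in the ball B_R. Write the far-field pattern in angular variables Λ(θ_x, θ_ζ) = c_ω ∫_{B_R} (η(y) − cos(θ_x − θ_ζ) γ(y)) exp(i ω ((cos θ_ζ, sin θ_ζ) − (cos θ_x, sin θ_x))·y) dy. Then the modulus of continuity of Λ satisfies w_Λ(s) ≤ 2 c_ω (ω R ‖η‖_{L¹(B_R)} + (ω R + 1) ‖γ‖_{L¹(B_R)}) s, where w_Λ(s) = sup over |θ_x − θ_x'| ≤ s and |θ_ζ − θ_ζ'| ≤ s of |Λ(θ_x, θ_ζ) − Λ(θ_x', θ_ζ')|. -/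

import Mathlib

open MeasureTheory Real

private lemma sqkey' (t : ℝ) : 2 - 2 * Real.cos t ≤ t ^ 2 := by
  have h1 := Real.cos_sq (t / 2)
  have h2 := Real.sin_sq (t / 2)
  have h3 := Real.abs_sin_le_abs (x := t / 2)
  have h4 : (2 : ℝ) * (t / 2) = t := by ring
  rw [h4] at h1
  nlinarith [sq_abs (Real.sin (t / 2)), sq_abs (t / 2), abs_nonneg (Real.sin (t / 2)),
    abs_nonneg (t / 2)]

private lemma dotbound' (a b y0 y1 R : ℝ) (hR : 0 ≤ R) (hy : y0 ^ 2 + y1 ^ 2 ≤ R ^ 2) :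
    |(Real.cos a - Real.cos b) * y0 + (Real.sin a - Real.sin b) * y1| ≤ |a - b| * R := by
  have hchord : (Real.cos a - Real.cos b) ^ 2 + (Real.sin a - Real.sin b) ^ 2 ≤ (a - b) ^ 2 := by
    have := sqkey' (a - b)
    rw [Real.cos_sub] at this
    nlinarith [Real.sin_sq_add_cos_sq a, Real.sin_sq_add_cos_sq b]
  have h2 : ((Real.cos a - Real.cos b) * y0 + (Real.sin a - Real.sin b) * y1) ^ 2 ≤
      (|a - b| * R) ^ 2 := by
    rw [mul_pow, sq_abs]
    nlinarith [sq_nonneg ((Real.cos a - Real.cos b) * y1 - (Real.sin a - Real.sin b) * y0),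
      sq_nonneg (y0 ^ 2 + y1 ^ 2),
      sq_nonneg ((Real.cos a - Real.cos b) ^ 2 + (Real.sin a - Real.sin b) ^ 2)]
  have h3 := Real.sqrt_le_sqrt h2
  rwa [Real.sqrt_sq_eq_abs, Real.sqrt_sq_eq_abs,
    abs_of_nonneg (mul_nonneg (abs_nonneg _) hR)] at h3

private lemma coslip' (a b : ℝ) : |Real.cos a - Real.cos b| ≤ |a - b| := by
  rw [Real.cos_sub_cos, abs_mul, abs_mul, abs_neg, abs_two]
  have h1 := Real.abs_sin_le_one ((a + b) / 2)
  have h2 : |Real.sin ((a - b) / 2)| ≤ |a - b| / 2 := by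
    have := Real.abs_sin_le_abs (x := (a - b) / 2)
    rwa [abs_div, abs_two] at this
  nlinarith [abs_nonneg (Real.sin ((a + b) / 2)), abs_nonneg (Real.sin ((a - b) / 2)),
    abs_nonneg (a - b)]

private lemma expdiff' (a b : ℝ) :
    ‖Complex.exp ((a : ℂ) * Complex.I) - Complex.exp ((b : ℂ) * Complex.I)‖ ≤ |a - b| := by
  have h : Complex.exp ((a : ℂ) * Complex.I) - Complex.exp ((b : ℂ) * Complex.I) =
      ((Real.cos a - Real.cos b : ℝ) : ℂ) + ((Real.sin a - Real.sin b : ℝ) : ℂ) * Complex.I := by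
    rw [Complex.exp_mul_I, Complex.exp_mul_I, ← Complex.ofReal_cos, ← Complex.ofReal_sin,
      ← Complex.ofReal_cos, ← Complex.ofReal_sin]
    push_cast; ring
  rw [h, Complex.norm_add_mul_I]
  have hX : (Real.cos a - Real.cos b) ^ 2 + (Real.sin a - Real.sin b) ^ 2 ≤ (a - b) ^ 2 := by
    have := sqkey' (a - b)
    rw [Real.cos_sub] at this
    nlinarith [Real.sin_sq_add_cos_sq a, Real.sin_sq_add_cos_sq b]
  calc Real.sqrt ((Real.cos a - Real.cos b) ^ 2 + (Real.sin a - Real.sin b) ^ 2)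
      ≤ Real.sqrt ((a - b) ^ 2) := Real.sqrt_le_sqrt hX
    _ = |a - b| := Real.sqrt_sq_eq_abs _

/-- Modulus of continuity bound for the far-field pattern in angular variables. -/
theorem stmt6 (ω cω R : ℝ) (hω : 0 < ω) (hc : 0 < cω) (hR : 0 < R)
    (γ η : EuclideanSpace ℝ (Fin 2) → ℝ)
    (hγ : Integrable γ) (hη : Integrable η)
    (hγs : ∀ y, y ∉ Metric.closedBall (0 : EuclideanSpace ℝ (Fin 2)) R → γ y = 0)
    (hηs : ∀ y, y ∉ Metric.closedBall (0 : EuclideanSpace ℝ (Fin 2)) R → η y = 0)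
    (Λ : ℝ → ℝ → ℂ)
    (hΛ : ∀ θx θζ : ℝ, Λ θx θζ =
      cω * ∫ y in Metric.closedBall (0 : EuclideanSpace ℝ (Fin 2)) R,
        ((η y : ℂ) - (Real.cos (θx - θζ) : ℂ) * (γ y : ℂ)) *
          Complex.exp (Complex.I * ω *
            (((Real.cos θζ - Real.cos θx) * y 0 + (Real.sin θζ - Real.sin θx) * y 1 : ℝ) : ℂ))) :
    ∀ s : ℝ, 0 ≤ s → ∀ θx θζ θx' θζ' : ℝ, |θx - θx'| ≤ s → |θζ - θζ'| ≤ s →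
      ‖Λ θx θζ - Λ θx' θζ'‖ ≤
        2 * cω * (ω * R * (∫ y in Metric.closedBall (0 : EuclideanSpace ℝ (Fin 2)) R, |η y|) +
          (ω * R + 1) * (∫ y in Metric.closedBall (0 : EuclideanSpace ℝ (Fin 2)) R, |γ y|)) * s := by
  intro s hs θx θζ θx' θζ' hx hζ
  have B_def : Metric.closedBall (0 : EuclideanSpace ℝ (Fin 2)) R =
      Metric.closedBall (0 : EuclideanSpace ℝ (Fin 2)) R := rfl
  -- norm of the exponential factor is 1
  have hexp1 : ∀ (a b : ℝ) (y : EuclideanSpace ℝ (Fin 2)),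
      ‖Complex.exp (Complex.I * ω *
        (((Real.cos b - Real.cos a) * y 0 + (Real.sin b - Real.sin a) * y 1 : ℝ) : ℂ))‖ = 1 := by
    intro a b y
    rw [Complex.norm_exp]
    simp [Complex.mul_re]
  -- integrability of the integrand
  have hint : ∀ a b : ℝ, Integrable (fun y : EuclideanSpace ℝ (Fin 2) =>
      ((η y : ℂ) - (Real.cos (a - b) : ℂ) * (γ y : ℂ)) *
        Complex.exp (Complex.I * ω *
          (((Real.cos b - Real.cos a) * y 0 + (Real.sin b - Real.sin a) * y 1 : ℝ) : ℂ)))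
      (volume.restrict (Metric.closedBall (0 : EuclideanSpace ℝ (Fin 2)) R)) := by
    intro a b
    have hbase : Integrable (fun y : EuclideanSpace ℝ (Fin 2) =>
        (η y : ℂ) - (Real.cos (a - b) : ℂ) * (γ y : ℂ))
        (volume.restrict (Metric.closedBall (0 : EuclideanSpace ℝ (Fin 2)) R)) :=
      (hη.ofReal.sub (hγ.ofReal.const_mul _)).restrict
    have hcont : Continuous (fun y : EuclideanSpace ℝ (Fin 2) =>
        Complex.exp (Complex.I * ω *
          (((Real.cos b - Real.cos a) * y 0 + (Real.sin b - Real.sin a) * y 1 : ℝ) : ℂ))) := by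
      fun_prop
    have h := Integrable.bdd_mul hbase hcont.aestronglyMeasurable
      (c := 1) (Filter.Eventually.of_forall fun y => le_of_eq (hexp1 a b y))
    exact h.congr (Filter.Eventually.of_forall fun y => mul_comm _ _)
  -- pointwise bound
  have key : ∀ y : EuclideanSpace ℝ (Fin 2),
      y ∈ Metric.closedBall (0 : EuclideanSpace ℝ (Fin 2)) R →
      ‖(((η y : ℂ) - (Real.cos (θx - θζ) : ℂ) * (γ y : ℂ)) *
          Complex.exp (Complex.I * ω *
            (((Real.cos θζ - Real.cos θx) * y 0 + (Real.sin θζ - Real.sin θx) * y 1 : ℝ) : ℂ))) -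
        (((η y : ℂ) - (Real.cos (θx' - θζ') : ℂ) * (γ y : ℂ)) *
          Complex.exp (Complex.I * ω *
            (((Real.cos θζ' - Real.cos θx') * y 0 + (Real.sin θζ' - Real.sin θx') * y 1 : ℝ) : ℂ)))‖
        ≤ (2 * ω * R * s) * |η y| + (2 * ω * R * s + 2 * s) * |γ y| := by
    intro y hy
    have hyR : (y 0) ^ 2 + (y 1) ^ 2 ≤ R ^ 2 := by
      have h1 : ‖y‖ ≤ R := by rwa [← mem_closedBall_zero_iff]
      have h2 : ‖y‖ = Real.sqrt ((y 0) ^ 2 + (y 1) ^ 2) := by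
        rw [EuclideanSpace.norm_eq]
        congr 1
        rw [Fin.sum_univ_two]
        simp [Real.norm_eq_abs, sq_abs]
      have h3 : (0 : ℝ) ≤ (y 0) ^ 2 + (y 1) ^ 2 := by positivity
      nlinarith [Real.sq_sqrt h3, Real.sqrt_nonneg ((y 0) ^ 2 + (y 1) ^ 2)]
    set φ1 : ℝ := (Real.cos θζ - Real.cos θx) * y 0 + (Real.sin θζ - Real.sin θx) * y 1 with hφ1
    set φ2 : ℝ := (Real.cos θζ' - Real.cos θx') * y 0 + (Real.sin θζ' - Real.sin θx') * y 1 with hφ2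
    set E1 : ℂ := Complex.exp (Complex.I * ω * (φ1 : ℂ)) with hE1
    set E2 : ℂ := Complex.exp (Complex.I * ω * (φ2 : ℂ)) with hE2
    have hE1norm : ‖E1‖ = 1 := hexp1 θx θζ y
    have hφdiff : |φ1 - φ2| ≤ 2 * R * s := by
      have d1 := dotbound' θζ θζ' (y 0) (y 1) R hR.le hyR
      have d2 := dotbound' θx θx' (y 0) (y 1) R hR.le hyR
      have heq : φ1 - φ2 =
          ((Real.cos θζ - Real.cos θζ') * y 0 + (Real.sin θζ - Real.sin θζ') * y 1) -
          ((Real.cos θx - Real.cos θx') * y 0 + (Real.sin θx - Real.sin θx') * y 1) := by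
        rw [hφ1, hφ2]; ring
      rw [heq]
      have := abs_sub ((Real.cos θζ - Real.cos θζ') * y 0 + (Real.sin θζ - Real.sin θζ') * y 1)
        ((Real.cos θx - Real.cos θx') * y 0 + (Real.sin θx - Real.sin θx') * y 1)
      have hb1 : |θζ - θζ'| * R ≤ s * R := mul_le_mul_of_nonneg_right hζ hR.le
      have hb2 : |θx - θx'| * R ≤ s * R := mul_le_mul_of_nonneg_right hx hR.le
      nlinarith
    have hEdiff : ‖E1 - E2‖ ≤ 2 * ω * R * s := by
      have hr1 : Complex.I * ω * (φ1 : ℂ) = ((ω * φ1 : ℝ) : ℂ) * Complex.I := by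
        push_cast; ring
      have hr2 : Complex.I * ω * (φ2 : ℂ) = ((ω * φ2 : ℝ) : ℂ) * Complex.I := by
        push_cast; ring
      rw [hE1, hE2, hr1, hr2]
      have h := expdiff' (ω * φ1) (ω * φ2)
      have : |ω * φ1 - ω * φ2| = ω * |φ1 - φ2| := by
        rw [← mul_sub, abs_mul, abs_of_pos hω]
      rw [this] at h
      calc ‖Complex.exp (((ω * φ1 : ℝ) : ℂ) * Complex.I) -
              Complex.exp (((ω * φ2 : ℝ) : ℂ) * Complex.I)‖
          ≤ ω * |φ1 - φ2| := h
        _ ≤ ω * (2 * R * s) := by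
            exact mul_le_mul_of_nonneg_left hφdiff hω.le
        _ = 2 * ω * R * s := by ring
    have hcdiff : |Real.cos (θx - θζ) - Real.cos (θx' - θζ')| ≤ 2 * s := by
      have h := coslip' (θx - θζ) (θx' - θζ')
      have h2 : |(θx - θζ) - (θx' - θζ')| ≤ 2 * s := by
        have heq : (θx - θζ) - (θx' - θζ') = (θx - θx') - (θζ - θζ') := by ring
        rw [heq]
        have := abs_sub (θx - θx') (θζ - θζ')
        linarith
      linarith
    have hdecomp :
        (((η y : ℂ) - (Real.cos (θx - θζ) : ℂ) * (γ y : ℂ)) * E1) -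
        (((η y : ℂ) - (Real.cos (θx' - θζ') : ℂ) * (γ y : ℂ)) * E2) =
        (η y : ℂ) * (E1 - E2) -
          (γ y : ℂ) * (((Real.cos (θx - θζ) : ℂ) - (Real.cos (θx' - θζ') : ℂ)) * E1 +
            (Real.cos (θx' - θζ') : ℂ) * (E1 - E2)) := by
      ring
    rw [hdecomp]
    have hn1 : ‖(η y : ℂ)‖ = |η y| := by rw [Complex.norm_real, Real.norm_eq_abs]
    have hn2 : ‖(γ y : ℂ)‖ = |γ y| := by rw [Complex.norm_real, Real.norm_eq_abs]
    have hn3 : ‖(Real.cos (θx - θζ) : ℂ) - (Real.cos (θx' - θζ') : ℂ)‖ ≤ 2 * s := by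
      rw [← Complex.ofReal_sub, Complex.norm_real, Real.norm_eq_abs]
      exact hcdiff
    have hn4 : ‖(Real.cos (θx' - θζ') : ℂ)‖ ≤ 1 := by
      rw [Complex.norm_real, Real.norm_eq_abs]
      exact Real.abs_cos_le_one _
    calc ‖(η y : ℂ) * (E1 - E2) -
            (γ y : ℂ) * (((Real.cos (θx - θζ) : ℂ) - (Real.cos (θx' - θζ') : ℂ)) * E1 +
              (Real.cos (θx' - θζ') : ℂ) * (E1 - E2))‖
        ≤ ‖(η y : ℂ) * (E1 - E2)‖ +
          ‖(γ y : ℂ) * (((Real.cos (θx - θζ) : ℂ) - (Real.cos (θx' - θζ') : ℂ)) * E1 +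
            (Real.cos (θx' - θζ') : ℂ) * (E1 - E2))‖ := norm_sub_le _ _
      _ ≤ |η y| * (2 * ω * R * s) + |γ y| * ((2 * s) * 1 + 1 * (2 * ω * R * s)) := by
          apply add_le_add
          · rw [norm_mul, hn1]
            exact mul_le_mul_of_nonneg_left hEdiff (abs_nonneg _)
          · rw [norm_mul, hn2]
            apply mul_le_mul_of_nonneg_left _ (abs_nonneg _)
            calc ‖((Real.cos (θx - θζ) : ℂ) - (Real.cos (θx' - θζ') : ℂ)) * E1 +
                    (Real.cos (θx' - θζ') : ℂ) * (E1 - E2)‖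
                ≤ ‖((Real.cos (θx - θζ) : ℂ) - (Real.cos (θx' - θζ') : ℂ)) * E1‖ +
                  ‖(Real.cos (θx' - θζ') : ℂ) * (E1 - E2)‖ := norm_add_le _ _
              _ ≤ (2 * s) * 1 + 1 * (2 * ω * R * s) := by
                  apply add_le_add
                  · rw [norm_mul, hE1norm]
                    simpa using hn3
                  · rw [norm_mul]
                    exact mul_le_mul hn4 hEdiff (norm_nonneg _) zero_le_one
      _ = (2 * ω * R * s) * |η y| + (2 * ω * R * s + 2 * s) * |γ y| := by ring
  -- put everything together
  rw [hΛ θx θζ, hΛ θx' θζ', ← mul_sub, ← integral_sub (hint θx θζ) (hint θx' θζ')]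
  rw [norm_mul, Complex.norm_real, Real.norm_eq_abs, abs_of_pos hc]
  have hgint : Integrable (fun y : EuclideanSpace ℝ (Fin 2) =>
      (2 * ω * R * s) * |η y| + (2 * ω * R * s + 2 * s) * |γ y|)
      (volume.restrict (Metric.closedBall (0 : EuclideanSpace ℝ (Fin 2)) R)) :=
    ((hη.abs.const_mul _).add (hγ.abs.const_mul _)).restrict
  have hbnd : ‖∫ y in Metric.closedBall (0 : EuclideanSpace ℝ (Fin 2)) R,
      ((((η y : ℂ) - (Real.cos (θx - θζ) : ℂ) * (γ y : ℂ)) *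
          Complex.exp (Complex.I * ω *
            (((Real.cos θζ - Real.cos θx) * y 0 + (Real.sin θζ - Real.sin θx) * y 1 : ℝ) : ℂ))) -
        (((η y : ℂ) - (Real.cos (θx' - θζ') : ℂ) * (γ y : ℂ)) *
          Complex.exp (Complex.I * ω *
            (((Real.cos θζ' - Real.cos θx') * y 0 +
              (Real.sin θζ' - Real.sin θx') * y 1 : ℝ) : ℂ))))‖ ≤
      ∫ y in Metric.closedBall (0 : EuclideanSpace ℝ (Fin 2)) R,
        ((2 * ω * R * s) * |η y| + (2 * ω * R * s + 2 * s) * |γ y|) := by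
    apply norm_integral_le_of_norm_le hgint
    filter_upwards [ae_restrict_mem measurableSet_closedBall] with y hy
    exact key y hy
  calc cω * ‖_‖ ≤ cω * ∫ y in Metric.closedBall (0 : EuclideanSpace ℝ (Fin 2)) R,
        ((2 * ω * R * s) * |η y| + (2 * ω * R * s + 2 * s) * |γ y|) :=
      mul_le_mul_of_nonneg_left hbnd hc.le
    _ = 2 * cω * (ω * R * (∫ y in Metric.closedBall (0 : EuclideanSpace ℝ (Fin 2)) R, |η y|) +
          (ω * R + 1) * (∫ y in Metric.closedBall (0 : EuclideanSpace ℝ (Fin 2)) R, |γ y|)) * s := by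
      rw [integral_add ((hη.abs.const_mul _).restrict) ((hγ.abs.const_mul _).restrict),
        integral_const_mul, integral_const_mul]
      ring
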